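/- Let n ≥ 2 and m ≥ 2 be integers, let μ > 0, R > 0 and let L satisfy L/μ ≥ 2. Set α = √( 2(L/μ − 1)/n + 1 ), q = (α − 1)/(α + 1), and define f_SC : ℝ^m → ℝ by f_SC(x) = ((L − μ)/(4n)) ( Σ_{l=1}^{m−1} (x_l − x_{l+1})² + (2/(α+1)) x_m² ) + (μ/2)‖x‖² − μ R √α · x_1. Then the unique global minimizer of f_SC over ℝ^m is x* = (2R√α/(α − 1)) · (q, q², …, q^m), it satisfies f_SC(x*) = − μ R² α/(α + 1), and ‖x*‖ ≤ R. -/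

import Mathlib

/-!
Write `f_SC(x) = Q(x) - c x₁` with `Q` the quadratic part, `c = μR√α`, and let `B` be the
polarization of `Q`. With `β = (L-μ)/(4n) = μ(α²-1)/8` and `γ = 2/(α+1) = 1 - q`, every
gradient equation of `f_SC` at the geometric vector `x*` reduces to `μ q = 2 β γ²`, so
`2 B(x*, h) = c h₁` for all `h`. Completing the square gives
`f_SC(x) = f_SC(x*) + Q(x - x*) ≥ f_SC(x*) + (μ/2)‖x - x*‖²`, hence `x*` is the unique
minimizer, and `f_SC(x*) = -c x*₁ / 2`. The bound `‖x*‖ ≤ R` is the geometric series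
`∑ q^(2i) ≤ q² / (1 - q²)`.
-/

open Finset

/-- The polarized quadratic part of `f_SC`, on sequences indexed from `0` with `N + 1`
coordinates; a vector of `ℝ^m` enters through its extension by zero, with `N = m - 1`. -/
noncomputable def chainForm (N : ℕ) (β γ μ : ℝ) (u v : ℕ → ℝ) : ℝ :=
  β * (∑ l ∈ range N, (u l - u (l + 1)) * (v l - v (l + 1)) + γ * (u N * v N)) +
    μ / 2 * ∑ i ∈ range (N + 1), u i * v i

namespace chainForm

variable {N : ℕ} {β γ μ : ℝ}

lemma self_eq (u : ℕ → ℝ) :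
    chainForm N β γ μ u u =
      β * (∑ l ∈ range N, (u l - u (l + 1)) ^ 2 + γ * u N ^ 2) +
        μ / 2 * ∑ i ∈ range (N + 1), u i ^ 2 := by
  simp only [chainForm, sq]

lemma add_add_self (u h : ℕ → ℝ) :
    chainForm N β γ μ (u + h) (u + h) =
      chainForm N β γ μ u u + 2 * chainForm N β γ μ u h + chainForm N β γ μ h h := by
  have hdiff (a b c d : ℝ) : (a + b - (c + d)) * (a + b - (c + d)) =
      (a - c) * (a - c) + 2 * ((a - c) * (b - d)) + (b - d) * (b - d) := by ring
  have hsq (a b : ℝ) : (a + b) * (a + b) = a * a + 2 * (a * b) + b * b := by ring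
  simp only [chainForm, Pi.add_apply, hdiff, hsq, sum_add_distrib, ← mul_sum]
  ring

lemma le_self (hβ : 0 ≤ β) (hγ : 0 ≤ γ) (u : ℕ → ℝ) :
    μ / 2 * ∑ i ∈ range (N + 1), u i ^ 2 ≤ chainForm N β γ μ u u := by
  rw [self_eq]
  have : 0 ≤ ∑ l ∈ range N, (u l - u (l + 1)) ^ 2 + γ * u N ^ 2 := by positivity
  nlinarith

lemma succ (u v : ℕ → ℝ) :
    chainForm (N + 1) β γ μ u v = chainForm N β γ μ u v +
      β * ((u N - u (N + 1)) * (v N - v (N + 1)) + γ * (u (N + 1) * v (N + 1) - u N * v N)) +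
      μ / 2 * (u (N + 1) * v (N + 1)) := by
  simp only [chainForm, sum_range_succ _ (N + 1), sum_range_succ _ N]
  ring

lemma two_mul_geom {q K : ℝ} (hγ : γ = 1 - q) (hq : μ * q = 2 * β * γ ^ 2) {u : ℕ → ℝ}
    (hu : ∀ i ≤ N, u i = K * q ^ (i + 1)) (h : ℕ → ℝ) :
    2 * chainForm N β γ μ u h = 2 * β * γ * K * h 0 := by
  subst hγ
  induction N with
  | zero =>
    simp only [chainForm, range_zero, sum_empty, zero_add, sum_range_one, hu 0 le_rfl]
    linear_combination K * h 0 * hq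
  | succ N ih =>
    rw [succ, mul_add, mul_add, ih fun i hi => hu i (by omega), hu N (by omega), hu (N + 1) le_rfl]
    linear_combination K * q ^ (N + 1) * h (N + 1) * hq

variable {c : ℝ} {u : ℕ → ℝ}

lemma self_sub_mul_eq_add_of_critical (hu : ∀ h, 2 * chainForm N β γ μ u h = c * h 0)
    (v : ℕ → ℝ) :
    chainForm N β γ μ v v - c * v 0 =
      chainForm N β γ μ u u - c * u 0 + chainForm N β γ μ (v - u) (v - u) := by
  have hv := add_add_self (N := N) (β := β) (γ := γ) (μ := μ) u (v - u)
  rw [add_sub_cancel] at hv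
  rw [hv, hu, Pi.sub_apply]
  ring

lemma self_sub_mul_eq_of_critical (hu : ∀ h, 2 * chainForm N β γ μ u h = c * h 0) :
    chainForm N β γ μ u u - c * u 0 = -(c * u 0 / 2) := by
  linarith [hu u]

end chainForm

lemma extend_val_apply {m : ℕ} (x : EuclideanSpace ℝ (Fin m)) (i : Fin m) :
    Function.extend Fin.val x 0 i = x i :=
  Fin.val_injective.extend_apply _ _ i

lemma chainForm_extend_self {m : ℕ} (hm : 1 ≤ m) (β γ μ : ℝ)
    (x : EuclideanSpace ℝ (Fin m)) :
    chainForm (m - 1) β γ μ (Function.extend Fin.val x 0) (Function.extend Fin.val x 0) =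
      β * (∑ l : Fin (m - 1),
            (x (Fin.castLE (by omega) l) - x (Fin.cast (by omega : m - 1 + 1 = m) l.succ)) ^ 2
          + γ * x ⟨m - 1, by omega⟩ ^ 2) + μ / 2 * ‖x‖ ^ 2 := by
  obtain ⟨N, rfl⟩ : ∃ N, m = N + 1 := ⟨m - 1, by omega⟩
  rw [chainForm.self_eq, EuclideanSpace.real_norm_sq_eq]
  show _ = β * (∑ l : Fin N, (x l.castSucc - x l.succ) ^ 2 + γ * x (Fin.last N) ^ 2) +
    μ / 2 * ∑ i, x i ^ 2
  simp only [← extend_val_apply x, Nat.add_sub_cancel, Fin.val_castSucc, Fin.val_succ,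
    Fin.val_last, Fin.sum_univ_eq_sum_range (fun i => (Function.extend Fin.val x 0 i -
      Function.extend Fin.val x 0 (i + 1)) ^ 2),
    Fin.sum_univ_eq_sum_range (fun i => Function.extend Fin.val x 0 i ^ 2)]

theorem minimizer_of_chainForm_critical {m : ℕ} {β γ μ c : ℝ}
    (hβ : 0 ≤ β) (hγ : 0 ≤ γ) (hμ : 0 < μ)
    {f : EuclideanSpace ℝ (Fin m) → ℝ}
    (hf : ∀ x, f x = chainForm (m - 1) β γ μ (Function.extend Fin.val x 0)
      (Function.extend Fin.val x 0) - c * Function.extend Fin.val x 0 0)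
    {xs : EuclideanSpace ℝ (Fin m)}
    (hxs : ∀ h, 2 * chainForm (m - 1) β γ μ (Function.extend Fin.val xs 0) h = c * h 0) :
    (∀ x, f xs ≤ f x) ∧ (∀ x, (∀ w, f x ≤ f w) → x = xs) ∧
      f xs = -(c * Function.extend Fin.val xs 0 0 / 2) := by
  have hsplit := chainForm.self_sub_mul_eq_add_of_critical hxs
  have hgap (x : EuclideanSpace ℝ (Fin m)) : μ / 2 * ∑ i ∈ range (m - 1 + 1),
      (Function.extend Fin.val x 0 i - Function.extend Fin.val xs 0 i) ^ 2 ≤ f x - f xs := by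
    have hQ := chainForm.le_self (N := m - 1) (μ := μ) hβ hγ
      (Function.extend Fin.val x 0 - Function.extend Fin.val xs 0)
    rw [hf, hf, hsplit]
    simp only [Pi.sub_apply] at hQ
    linarith
  refine ⟨fun x => ?_, fun x hx => ?_, by rw [hf, chainForm.self_sub_mul_eq_of_critical hxs]⟩
  · nlinarith [hgap x, sum_nonneg fun i (_ : i ∈ range (m - 1 + 1)) =>
      sq_nonneg (Function.extend Fin.val x 0 i - Function.extend Fin.val xs 0 i)]
  · have hsum : ∑ i ∈ range (m - 1 + 1),
        (Function.extend Fin.val x 0 i - Function.extend Fin.val xs 0 i) ^ 2 = 0 :=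
      le_antisymm (by nlinarith [hgap x, hx xs]) (by positivity)
    ext i
    have hi := (sum_eq_zero_iff_of_nonneg fun _ _ => sq_nonneg _).1 hsum i (mem_range.2 (by omega))
    rwa [extend_val_apply, extend_val_apply, sq_eq_zero_iff, sub_eq_zero] at hi

lemma sum_sq_geom_le {q : ℝ} (hq₀ : 0 ≤ q) (hq₁ : q < 1) (K : ℝ) (n : ℕ) :
    ∑ i ∈ range n, (K * q ^ (i + 1)) ^ 2 ≤ K ^ 2 * q ^ 2 / (1 - q ^ 2) := by
  have hgeom := geom_sum_Ico_le_of_lt_one (m := 1) (n := n + 1) (sq_nonneg q) (by nlinarith)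
  rw [sum_Ico_eq_sum_range, Nat.add_sub_cancel, pow_one] at hgeom
  calc ∑ i ∈ range n, (K * q ^ (i + 1)) ^ 2 = K ^ 2 * ∑ i ∈ range n, (q ^ 2) ^ (1 + i) := by
        rw [mul_sum]; exact sum_congr rfl fun i _ => by ring
    _ ≤ K ^ 2 * (q ^ 2 / (1 - q ^ 2)) := by gcongr
    _ = K ^ 2 * q ^ 2 / (1 - q ^ 2) := by ring

lemma chainForm.two_mul_geom_of_alpha {N : ℕ} {μ R α q : ℝ} (hα : 1 < α)
    (hq : q = (α - 1) / (α + 1)) {u : ℕ → ℝ}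
    (hu : ∀ i ≤ N, u i = 2 * R * √α / (α - 1) * q ^ (i + 1)) (h : ℕ → ℝ) :
    2 * chainForm N (μ * (α ^ 2 - 1) / 8) (2 / (α + 1)) μ u h = μ * R * √α * h 0 := by
  have hα_add_one : α + 1 ≠ 0 := by linarith
  have hα_sub_one : α - 1 ≠ 0 := by linarith
  rw [chainForm.two_mul_geom (by rw [hq]; field_simp; ring) (by rw [hq]; field_simp; ring) hu]
  field_simp
  ring

lemma norm_le_of_eq_geom {m : ℕ} {α q R : ℝ} (hα : 1 < α) (hR : 0 ≤ R)
    (hq : q = (α - 1) / (α + 1)) {x : EuclideanSpace ℝ (Fin m)}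
    (hx : ∀ i : Fin m, x i = 2 * R * √α / (α - 1) * q ^ ((i : ℕ) + 1)) : ‖x‖ ≤ R := by
  have hq₀ : 0 ≤ q := by rw [hq]; exact div_nonneg (by linarith) (by linarith)
  have hq₁ : q < 1 := by rw [hq, div_lt_one (by linarith)]; linarith
  rw [← sq_le_sq₀ (norm_nonneg _) hR, EuclideanSpace.real_norm_sq_eq]
  calc ∑ i, x i ^ 2 = ∑ i ∈ range m, (2 * R * √α / (α - 1) * q ^ (i + 1)) ^ 2 := by
        simp only [hx]
        exact Fin.sum_univ_eq_sum_range (fun i => (2 * R * √α / (α - 1) * q ^ (i + 1)) ^ 2) m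
    _ ≤ (2 * R * √α / (α - 1)) ^ 2 * q ^ 2 / (1 - q ^ 2) := sum_sq_geom_le hq₀ hq₁ _ m
    _ = R ^ 2 := by
      have hα_add_one : α + 1 ≠ 0 := by linarith
      have hα_sub_one : α - 1 ≠ 0 := by linarith
      rw [hq]; field_simp; rw [Real.sq_sqrt (by linarith), div_eq_iff (by nlinarith)]; ring

/-- The strongly convex hard instance `f_SC` has unique global minimizer
`x* = (2R√α/(α−1))(q, q², …, q^m)`, with `f_SC(x*) = −μR²α/(α+1)` and `‖x*‖ ≤ R`. -/
theorem fSC_minimizer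
    (n m : ℕ) (hn : 2 ≤ n) (hm : 2 ≤ m)
    (L μ R : ℝ) (hμ : 0 < μ) (hR : 0 < R) (hL : 2 ≤ L / μ)
    (α q : ℝ) (hα : α = Real.sqrt (2 * (L / μ - 1) / n + 1)) (hq : q = (α - 1) / (α + 1))
    (f : EuclideanSpace ℝ (Fin m) → ℝ)
    (hf : ∀ x, f x =
      ((L - μ) / (4 * n)) *
        ((∑ l : Fin (m - 1),
            (x (Fin.castLE (by omega) l) - x (Fin.cast (by omega : m - 1 + 1 = m) l.succ)) ^ 2)
          + (2 / (α + 1)) * (x ⟨m - 1, by omega⟩) ^ 2)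
      + (μ / 2) * ‖x‖ ^ 2 - μ * R * Real.sqrt α * x ⟨0, by omega⟩)
    (xs : EuclideanSpace ℝ (Fin m))
    (hxs : ∀ i : Fin m, xs i = (2 * R * Real.sqrt α / (α - 1)) * q ^ ((i : ℕ) + 1)) :
    (∀ x, f xs ≤ f x) ∧
    (∀ x, (∀ w, f x ≤ f w) → x = xs) ∧
    f xs = -(μ * R ^ 2 * α / (α + 1)) ∧
    ‖xs‖ ≤ R := by
  have hn₀ : (0 : ℝ) < n := by exact_mod_cast (by omega : 0 < n)
  have harg : 0 < 2 * (L / μ - 1) / n := div_pos (by linarith) hn₀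
  have hα₁ : 1 < α := by rw [hα, Real.lt_sqrt zero_le_one]; linarith
  have hβ : (L - μ) / (4 * n) = μ * (α ^ 2 - 1) / 8 := by
    rw [hα, Real.sq_sqrt (by linarith)]; field_simp; ring
  have hgeom (i : ℕ) (hi : i ≤ m - 1) :
      Function.extend Fin.val xs 0 i = 2 * R * √α / (α - 1) * q ^ (i + 1) := by
    rw [← hxs ⟨i, by omega⟩, ← extend_val_apply]
  obtain ⟨hmin, huniq, hval⟩ := minimizer_of_chainForm_critical (f := f)
    (div_nonneg (mul_nonneg hμ.le (by nlinarith)) (by norm_num)) (by positivity) hμ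
    (fun x => by
      rw [hf, hβ, chainForm_extend_self (by omega), ← extend_val_apply x ⟨0, by omega⟩])
    (chainForm.two_mul_geom_of_alpha hα₁ hq hgeom)
  refine ⟨hmin, huniq, ?_, norm_le_of_eq_geom hα₁ hR.le hq hxs⟩
  have hα_add_one : α + 1 ≠ 0 := by linarith
  have hα_sub_one : α - 1 ≠ 0 := by linarith
  rw [hval, hgeom 0 (Nat.zero_le _), zero_add, pow_one, hq]
  field_simp
  rw [Real.sq_sqrt (by linarith)]
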